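/- arXiv:2207.04314 — 2 statements merged into one kernel-verified Lean document; each statement's English description precedes it below -/
import Mathlib

section
/- Let Y be an integrable random variable, D a {0,1}-valued random variable on a probability space, and let a ≤ Y ≤ b a.s. for constants a, b. Let Y₁ = Y·D + S₁·(1-D), Y₀ = Y·(1-D) + S₀·D with S₁, S₀ ∈ [a,b] a.s. Then E[Y₁] ∈ [E[Y·D] + a·P(D=0), E[Y·D] + b·P(D=0)] and E[Y₀] ∈ [E[Y·(1-D)] + a·P(D=1), E[Y·(1-D)] + b·P(D=1)], and both bounds are attained (by S₁, S₀ constant equal to a or b). -/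
open MeasureTheory Set

section Aux

variable {Ω : Type*} [MeasurableSpace Ω] (μ : Measure Ω) [IsProbabilityMeasure μ]

lemma aux_intE (E : Ω → ℝ) (hEm : Measurable E) (hE : ∀ ω, E ω = 0 ∨ E ω = 1) :
    ∫ ω, E ω ∂μ = (μ {ω | E ω = 1}).toReal := by
  have hind : E = Set.indicator {ω | E ω = 1} (fun _ => (1 : ℝ)) := by
    funext ω
    rcases hE ω with h | h
    · rw [Set.indicator_of_notMem (by simp [h, Set.mem_setOf_eq]) , h]
    · rw [Set.indicator_of_mem (by simpa [Set.mem_setOf_eq] using h), h]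
  have hs : MeasurableSet {ω | E ω = 1} := hEm (measurableSet_singleton 1)
  rw [hind, integral_indicator_const (1 : ℝ) hs]
  simp
  rfl

lemma aux_intEgr (E : Ω → ℝ) (hEm : Measurable E) (hE : ∀ ω, E ω = 0 ∨ E ω = 1) :
    Integrable E μ := by
  refine Integrable.mono' (integrable_const (1 : ℝ)) hEm.aestronglyMeasurable ?_
  refine Filter.Eventually.of_forall fun ω => ?_
  rcases hE ω with h | h <;> simp [h]

lemma aux_intYE (E Y : Ω → ℝ) (hYi : Integrable Y μ) (hYm : Measurable Y)
    (hEm : Measurable E) (hE : ∀ ω, E ω = 0 ∨ E ω = 1) :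
    Integrable (fun ω => Y ω * E ω) μ := by
  refine Integrable.mono' hYi.abs (hYm.mul hEm).aestronglyMeasurable ?_
  refine Filter.Eventually.of_forall fun ω => ?_
  rcases hE ω with h | h <;> simp [h, abs_nonneg]

lemma aux_intSE (E S : Ω → ℝ) (a b : ℝ) (hSm : Measurable S)
    (hS : ∀ᵐ ω ∂μ, S ω ∈ Icc a b)
    (hEm : Measurable E) (hE : ∀ ω, E ω = 0 ∨ E ω = 1) :
    Integrable (fun ω => S ω * E ω) μ := by
  refine Integrable.mono' (integrable_const (max |a| |b|)) (hSm.mul hEm).aestronglyMeasurable ?_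
  filter_upwards [hS] with ω hω
  have hSb : |S ω| ≤ max |a| |b| := abs_le.mpr ⟨le_trans (neg_le_neg (le_max_left |a| |b|))
      (le_trans (neg_abs_le a) hω.1), le_trans hω.2 (le_trans (le_abs_self b) (le_max_right _ _))⟩
  rcases hE ω with h | h
  · simp only [h, mul_zero, norm_zero]
    exact le_trans (abs_nonneg a) (le_max_left |a| |b|)
  · simpa [h] using hSb

/-- `∫ c * E = c * μ{E = 1}`. -/
lemma aux_intCE (E : Ω → ℝ) (c : ℝ) (hEm : Measurable E) (hE : ∀ ω, E ω = 0 ∨ E ω = 1) :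
    ∫ ω, c * E ω ∂μ = c * (μ {ω | E ω = 1}).toReal := by
  rw [integral_const_mul, aux_intE μ E hEm hE]

/-- `c * μ{E=1} ≤ ∫ S * E ≤ c' * μ{E=1}` from `c ≤ S ≤ c'` a.e. -/
lemma aux_SE_bounds (E S : Ω → ℝ) (a b : ℝ) (hSm : Measurable S)
    (hS : ∀ᵐ ω ∂μ, S ω ∈ Icc a b)
    (hEm : Measurable E) (hE : ∀ ω, E ω = 0 ∨ E ω = 1) :
    a * (μ {ω | E ω = 1}).toReal ≤ ∫ ω, S ω * E ω ∂μ ∧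
    ∫ ω, S ω * E ω ∂μ ≤ b * (μ {ω | E ω = 1}).toReal := by
  have hEnn : ∀ ω, 0 ≤ E ω := fun ω => by rcases hE ω with h | h <;> simp [h]
  have hiCE : ∀ c : ℝ, Integrable (fun ω => c * E ω) μ :=
    fun c => (aux_intEgr μ E hEm hE).const_mul c
  have hiSE := aux_intSE μ E S a b hSm hS hEm hE
  constructor
  · rw [← aux_intCE μ E a hEm hE]
    refine integral_mono_ae (hiCE a) hiSE ?_
    filter_upwards [hS] with ω hω
    exact mul_le_mul_of_nonneg_right hω.1 (hEnn ω)
  · rw [← aux_intCE μ E b hEm hE]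
    refine integral_mono_ae hiSE (hiCE b) ?_
    filter_upwards [hS] with ω hω
    exact mul_le_mul_of_nonneg_right hω.2 (hEnn ω)

end Aux

theorem worst_case_mean_bounds_sharp
    {Ω : Type*} [MeasurableSpace Ω] (μ : Measure Ω) [IsProbabilityMeasure μ]
    (a b : ℝ) (Y D S₁ S₀ : Ω → ℝ)
    (hYi : Integrable Y μ) (hYm : Measurable Y) (hDm : Measurable D)
    (hD : ∀ ω, D ω = 0 ∨ D ω = 1)
    (hY : ∀ᵐ ω ∂μ, Y ω ∈ Icc a b)
    (hS₁m : Measurable S₁) (hS₀m : Measurable S₀)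
    (hS₁ : ∀ᵐ ω ∂μ, S₁ ω ∈ Icc a b) (hS₀ : ∀ᵐ ω ∂μ, S₀ ω ∈ Icc a b)
    (Y₁ Y₀ : Ω → ℝ)
    (hY₁ : ∀ ω, Y₁ ω = Y ω * D ω + S₁ ω * (1 - D ω))
    (hY₀ : ∀ ω, Y₀ ω = Y ω * (1 - D ω) + S₀ ω * D ω) :
    ((∫ ω, Y₁ ω ∂μ) ∈
      Icc ((∫ ω, Y ω * D ω ∂μ) + a * (μ {ω | D ω = 0}).toReal)
          ((∫ ω, Y ω * D ω ∂μ) + b * (μ {ω | D ω = 0}).toReal)) ∧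
    ((∫ ω, Y₀ ω ∂μ) ∈
      Icc ((∫ ω, Y ω * (1 - D ω) ∂μ) + a * (μ {ω | D ω = 1}).toReal)
          ((∫ ω, Y ω * (1 - D ω) ∂μ) + b * (μ {ω | D ω = 1}).toReal)) ∧
    (∫ ω, (Y ω * D ω + a * (1 - D ω)) ∂μ) =
      (∫ ω, Y ω * D ω ∂μ) + a * (μ {ω | D ω = 0}).toReal ∧
    (∫ ω, (Y ω * D ω + b * (1 - D ω)) ∂μ) =
      (∫ ω, Y ω * D ω ∂μ) + b * (μ {ω | D ω = 0}).toReal ∧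
    (∫ ω, (Y ω * (1 - D ω) + a * D ω) ∂μ) =
      (∫ ω, Y ω * (1 - D ω) ∂μ) + a * (μ {ω | D ω = 1}).toReal ∧
    (∫ ω, (Y ω * (1 - D ω) + b * D ω) ∂μ) =
      (∫ ω, Y ω * (1 - D ω) ∂μ) + b * (μ {ω | D ω = 1}).toReal := by
  set E₀ : Ω → ℝ := fun ω => 1 - D ω with hE₀def
  have hE₀m : Measurable E₀ := measurable_const.sub hDm
  have hE₀ : ∀ ω, E₀ ω = 0 ∨ E₀ ω = 1 := fun ω => by
    rcases hD ω with h | h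
    · right; simp [hE₀def, h]
    · left; simp [hE₀def, h]
  have hset₀ : {ω | E₀ ω = 1} = {ω | D ω = 0} := by
    ext ω; simp [hE₀def, sub_eq_self]
  have hset₁ : {ω | D ω = 1} = {ω | D ω = 1} := rfl
  -- integrability
  have hiYD := aux_intYE μ D Y hYi hYm hDm hD
  have hiYE₀ := aux_intYE μ E₀ Y hYi hYm hE₀m hE₀
  have hiS₁E₀ := aux_intSE μ E₀ S₁ a b hS₁m hS₁ hE₀m hE₀
  have hiS₀D := aux_intSE μ D S₀ a b hS₀m hS₀ hDm hD
  have hiCE₀ : ∀ c : ℝ, Integrable (fun ω => c * E₀ ω) μ :=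
    fun c => (aux_intEgr μ E₀ hE₀m hE₀).const_mul c
  have hiCD : ∀ c : ℝ, Integrable (fun ω => c * D ω) μ :=
    fun c => (aux_intEgr μ D hDm hD).const_mul c
  -- split integrals
  have hsplit₁ : ∫ ω, Y₁ ω ∂μ = (∫ ω, Y ω * D ω ∂μ) + ∫ ω, S₁ ω * E₀ ω ∂μ := by
    rw [show (fun ω => Y₁ ω) = fun ω => Y ω * D ω + S₁ ω * E₀ ω from funext fun ω => hY₁ ω]
    exact integral_add hiYD hiS₁E₀
  have hsplit₀ : ∫ ω, Y₀ ω ∂μ = (∫ ω, Y ω * E₀ ω ∂μ) + ∫ ω, S₀ ω * D ω ∂μ := by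
    rw [show (fun ω => Y₀ ω) = fun ω => Y ω * E₀ ω + S₀ ω * D ω from funext fun ω => hY₀ ω]
    exact integral_add hiYE₀ hiS₀D
  have hb₁ := aux_SE_bounds μ E₀ S₁ a b hS₁m hS₁ hE₀m hE₀
  have hb₀ := aux_SE_bounds μ D S₀ a b hS₀m hS₀ hDm hD
  rw [hset₀] at hb₁
  have hCE₀ : ∀ c : ℝ, ∫ ω, c * E₀ ω ∂μ = c * (μ {ω | D ω = 0}).toReal := fun c => by
    rw [aux_intCE μ E₀ c hE₀m hE₀, hset₀]
  have hCD : ∀ c : ℝ, ∫ ω, c * D ω ∂μ = c * (μ {ω | D ω = 1}).toReal := fun c =>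
    aux_intCE μ D c hDm hD
  refine ⟨⟨?_, ?_⟩, ⟨?_, ?_⟩, ?_, ?_, ?_, ?_⟩
  · rw [hsplit₁]; exact add_le_add_right hb₁.1 _
  · rw [hsplit₁]; exact add_le_add_right hb₁.2 _
  · rw [hsplit₀]; exact add_le_add_right hb₀.1 _
  · rw [hsplit₀]; exact add_le_add_right hb₀.2 _
  · rw [integral_add hiYD (hiCE₀ a), hCE₀ a]
  · rw [integral_add hiYD (hiCE₀ b), hCE₀ b]
  · rw [integral_add hiYE₀ (hiCD a), hCD a]
  · rw [integral_add hiYE₀ (hiCD b), hCD b]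
end

section
/- Let 𝒵 be a finite totally ordered set, P a probability mass function on 𝒵, and let L, U : 𝒵 → ℝ satisfy L(z) ≤ U(z') for all z, z' ∈ 𝒵 with z ≤ z' — i.e., there exists a nondecreasing function m : 𝒵 → ℝ with L(z) ≤ m(z) ≤ U(z) for all z. Then Σ_{z} P(z)·(max_{z₁ ≤ z} L(z₁)) ≤ Σ_z P(z)·m(z) ≤ Σ_z P(z)·(min_{z₂ ≥ z} U(z₂)). -/
noncomputable def runMax {𝒵 : Type*} [Fintype 𝒵] [LinearOrder 𝒵]
    (L : 𝒵 → ℝ) (z : 𝒵) : ℝ :=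
  (Finset.univ.filter fun z₁ => z₁ ≤ z).sup' ⟨z, by simp⟩ L

noncomputable def runMin {𝒵 : Type*} [Fintype 𝒵] [LinearOrder 𝒵]
    (U : 𝒵 → ℝ) (z : 𝒵) : ℝ :=
  (Finset.univ.filter fun z₂ => z ≤ z₂).inf' ⟨z, by simp⟩ U

theorem miv_envelope_bounds
    {𝒵 : Type*} [Fintype 𝒵] [LinearOrder 𝒵] [Nonempty 𝒵]
    (P : 𝒵 → ℝ) (hP : ∀ z, 0 ≤ P z) (hPsum : ∑ z, P z = 1)
    (L U m : 𝒵 → ℝ) (hm : Monotone m)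
    (hLm : ∀ z, L z ≤ m z) (hmU : ∀ z, m z ≤ U z) :
    (∑ z, P z * runMax L z) ≤ (∑ z, P z * m z) ∧
      (∑ z, P z * m z) ≤ (∑ z, P z * runMin U z) := by
  constructor
  · apply Finset.sum_le_sum
    intro z _
    apply mul_le_mul_of_nonneg_left _ (hP z)
    apply Finset.sup'_le
    intro z₁ hz₁
    simp only [Finset.mem_filter] at hz₁
    exact (hLm z₁).trans (hm hz₁.2)
  · apply Finset.sum_le_sum
    intro z _
    apply mul_le_mul_of_nonneg_left _ (hP z)
    apply Finset.le_inf'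
    intro z₂ hz₂
    simp only [Finset.mem_filter] at hz₂
    exact (hm hz₂.2).trans (hmU z₂)
end
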